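/- arXiv:math/0701629 — 5 statements merged into one kernel-verified Lean document; each statement's English description precedes it below -/
import Mathlib

section
/- Let v, r, k, b be positive integers with v·r = k·b and gcd(v, r) = 1. Then k = gcd(k,v) · gcd(k,r), b = gcd(b,v) · gcd(b,r), v = gcd(b,v) · gcd(k,v), and r = gcd(b,r) · gcd(k,r). -/
theorem Nat.Coprime.eq_gcd_mul_gcd_of_dvd_mul {m n d : ℕ} (hmn : m.Coprime n) (hd : d ∣ m * n) :
    d = d.gcd m * d.gcd n := by
  rw [← hmn.gcd_mul d, Nat.gcd_eq_left hd]

theorem stmt_2_general (v r k b : ℕ)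
    (h1 : v * r = k * b) (h2 : Nat.gcd v r = 1) :
    k = Nat.gcd k v * Nat.gcd k r ∧
    b = Nat.gcd b v * Nat.gcd b r ∧
    v = Nat.gcd b v * Nat.gcd k v ∧
    r = Nat.gcd b r * Nat.gcd k r := by
  have hvr : Nat.Coprime v r := h2
  refine ⟨hvr.eq_gcd_mul_gcd_of_dvd_mul (h1 ▸ dvd_mul_right k b),
    hvr.eq_gcd_mul_gcd_of_dvd_mul (h1 ▸ dvd_mul_left b k), ?_, ?_⟩
  · rw [mul_comm, Nat.gcd_mul_gcd_of_coprime_of_mul_eq_mul hvr h1.symm]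
  · rw [mul_comm, Nat.gcd_mul_gcd_of_coprime_of_mul_eq_mul hvr.symm (by rw [← h1, mul_comm])]

theorem stmt_2 (v r k b : ℕ) (hv : 0 < v) (hr : 0 < r) (hk : 0 < k) (hb : 0 < b)
    (h1 : v * r = k * b) (h2 : Nat.gcd v r = 1) :
    k = Nat.gcd k v * Nat.gcd k r ∧
    b = Nat.gcd b v * Nat.gcd b r ∧
    v = Nat.gcd b v * Nat.gcd k v ∧
    r = Nat.gcd b r * Nat.gcd k r :=
  stmt_2_general v r k b h1 h2
end

section
/- Let k, c, d, x, y, r be positive integers with y·c = (k choose 2) - x, x·d = (k choose 2) - y, and c·d - 1 = r·(k-1). Then 2·x·y·r = k·((k choose 2) - x - y); equivalently r/k = ((k choose 2) - x - y)/(2xy). Moreover c = 2xr/k + 1 and d = 2yr/k + 1. -/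
/-!
Multiplying the two Delandtsheer–Doyen equations gives `x y · c d = (n - x)(n - y)` with
`n = k(k-1)/2`, and `c d = r (k - 1) + 1` turns this into `x y r (k - 1) = n (n - x - y)`.
Cancelling `k - 1` against `2 n = k (k - 1)` yields `2 x y r = k (n - x - y)`; substituting this
back into `y c = n - x` and `x d = n - y` gives the values of `c k` and `d k`.
-/

namespace DelandtsheerDoyen

variable {R : Type*} [CommRing R] [IsDomain R] {k c d x y r n : R}

theorem two_mul_mul_mul_eq (hc : y * c = n - x) (hd : x * d = n - y)
    (hcd : c * d - 1 = r * (k - 1)) (hn : 2 * n = k * (k - 1)) (hk : k - 1 ≠ 0) :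
    2 * x * y * r = k * (n - x - y) := by
  refine mul_right_cancel₀ hk ?_
  linear_combination -2 * x * y * hcd + 2 * (x * d) * hc + 2 * (n - x) * hd + (n - x - y) * hn

theorem mul_eq_two_mul_mul_add (hc : y * c = n - x) (hxyr : 2 * x * y * r = k * (n - x - y))
    (hy : y ≠ 0) : c * k = 2 * x * r + k :=
  mul_right_cancel₀ hy (by linear_combination k * hc - hxyr)

end DelandtsheerDoyen

theorem Nat.two_mul_choose_two (k : ℕ) : 2 * k.choose 2 = k * (k - 1) := by
  rw [Nat.choose_two_right, mul_comm, Nat.div_two_mul_two_of_even (Nat.even_mul_pred_self k)]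

open DelandtsheerDoyen in
theorem stmt_5_general (k c d x y r : ℕ) (hc : 0 < c) (hd : 0 < d)
    (hx : 0 < x) (hy : 0 < y)
    (h1 : y * c = Nat.choose k 2 - x) (h2 : x * d = Nat.choose k 2 - y)
    (h3 : c * d - 1 = r * (k - 1)) :
    2 * x * y * r = k * (Nat.choose k 2 - x - y) ∧
    c * k = 2 * x * r + k ∧
    d * k = 2 * y * r + k := by
  set n := k.choose 2
  have hxn : x + y * c = n := by have := Nat.mul_pos hy hc; omega
  have hyn : y + x * d = n := by have := Nat.mul_pos hx hd; omega
  have hcd : c * d = r * (k - 1) + 1 := by have := Nat.mul_pos hc hd; omega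
  have hk : 2 ≤ k := not_lt.mp fun hk => by
    have : n = 0 := Nat.choose_eq_zero_of_lt hk
    omega
  have hn := Nat.two_mul_choose_two k
  have hxy : x + y ≤ n := by have := Nat.le_mul_of_pos_right y hc; omega
  have hk1 : ((k - 1 : ℕ) : ℤ) = k - 1 := Nat.cast_sub (by omega)
  have hc' : (y * c : ℤ) = n - x := by rw [← hxn]; push_cast; ring
  have hd' : (x * d : ℤ) = n - y := by rw [← hyn]; push_cast; ring
  have hcd' : (c * d - 1 : ℤ) = r * (k - 1) := by
    rw [← hk1, sub_eq_iff_eq_add]; exact_mod_cast hcd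
  have hn' : (2 * n : ℤ) = k * (k - 1) := by rw [← hk1]; exact_mod_cast hn
  have hxyr := two_mul_mul_mul_eq hc' hd' hcd' hn' (by omega)
  refine ⟨?_, ?_, ?_⟩
  · rw [Nat.sub_sub]
    zify [hxy]
    linear_combination hxyr
  · exact_mod_cast mul_eq_two_mul_mul_add hc' hxyr (by omega)
  · have hyxr : (2 * y * x * r : ℤ) = k * (n - y - x) := by linear_combination hxyr
    exact_mod_cast mul_eq_two_mul_mul_add hd' hyxr (by omega)

theorem stmt_5 (k c d x y r : ℕ) (hk : 0 < k) (hc : 0 < c) (hd : 0 < d)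
    (hx : 0 < x) (hy : 0 < y) (hr : 0 < r)
    (hx' : x ≤ Nat.choose k 2) (hy' : y ≤ Nat.choose k 2)
    (h1 : y * c = Nat.choose k 2 - x) (h2 : x * d = Nat.choose k 2 - y)
    (h3 : c * d - 1 = r * (k - 1)) :
    2 * x * y * r = k * (Nat.choose k 2 - x - y) ∧
    c * k = 2 * x * r + k ∧
    d * k = 2 * y * r + k :=
  stmt_5_general k c d x y r hc hd hx hy h1 h2 h3
end

section
/- There do not exist positive integers v, d, c, r, k, h with d ≥ 2, h ≥ 2, k ≥ 2, v = d·c, v - 1 = r·(k - 1), c = r·(h - 1) + 1 and r ≥ k. -/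
/-!
Both `c = r(h-1)+1` and `v = r(k-1)+1` are `≡ 1 (mod r)`, so `v = dc` forces `d ≡ 1 (mod r)`;
with `d ≥ 2` this gives `d ≥ r + 1`. Then `v = dc ≥ (r+1)²`, whereas Fisher's inequality `k ≤ r`
bounds `v = r(k-1)+1` by `r(r-1)+1`.
-/

namespace Nat

theorem mul_add_one_modEq_one (r a : ℕ) : r * a + 1 ≡ 1 [MOD r] := by
  simp [Nat.ModEq, Nat.add_mod]

theorem modEq_one_of_mul_modEq_one {r d c : ℕ} (hc : c ≡ 1 [MOD r]) (hdc : d * c ≡ 1 [MOD r]) :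
    d ≡ 1 [MOD r] :=
  calc d = d * 1 := (mul_one d).symm
    _ ≡ d * c [MOD r] := hc.symm.mul_left d
    _ ≡ 1 [MOD r] := hdc

theorem lt_of_modEq_one {r d : ℕ} (h : d ≡ 1 [MOD r]) (hd : 2 ≤ d) : r < d := by
  have hdvd : r ∣ d - 1 := (Nat.modEq_iff_dvd' (by omega)).mp h.symm
  have := Nat.le_of_dvd (by omega) hdvd
  omega

end Nat

theorem stmt_10 :
    ¬ ∃ v d c r k h : ℕ, 0 < v ∧ 0 < c ∧ 0 < r ∧ 2 ≤ d ∧ 2 ≤ h ∧ 2 ≤ k ∧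
      v = d * c ∧ v - 1 = r * (k - 1) ∧ c = r * (h - 1) + 1 ∧ k ≤ r := by
  rintro ⟨v, d, c, r, k, h, hv0, -, hr, hd, hh, -, rfl, hv1, rfl, hkr⟩
  have hv : d * (r * (h - 1) + 1) = r * (k - 1) + 1 := by omega
  have hrd : r < d := by
    have hdc : d * (r * (h - 1) + 1) ≡ 1 [MOD r] := hv ▸ Nat.mul_add_one_modEq_one r (k - 1)
    exact Nat.lt_of_modEq_one
      (Nat.modEq_one_of_mul_modEq_one (Nat.mul_add_one_modEq_one r (h - 1)) hdc) hd
  have hc : r + 1 ≤ r * (h - 1) + 1 := by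
    have := Nat.le_mul_of_pos_right r (show 0 < h - 1 by omega)
    omega
  have hlow : (r + 1) * (r + 1) ≤ r * (k - 1) + 1 := hv ▸ Nat.mul_le_mul hrd hc
  have hup : r * (k - 1) ≤ r * r := Nat.mul_le_mul_left r (by omega)
  nlinarith
end

section
/- Let G act transitively on a finite set X, let N be a normal subgroup of G, and let α ∈ X. Then the fixed-point set Fix_X(N_α) of the point stabiliser N_α is a block of imprimitivity for G, and the normaliser N_G(N_α) acts transitively on Fix_X(N_α). -/
/-!
Write `K = N ⊓ G_α`. Since `N` is normal, `N ⊓ G_{g•α} = gKg⁻¹`, so `g • α` is fixed by `K` iff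
`K ≤ gKg⁻¹`. As `X` is finite, some power `g ^ m` fixes `α` and hence normalises `K`; the chain
`K ≤ gKg⁻¹ ≤ ⋯ ≤ g^m K g^{-m} = K` then forces `g ∈ N_G(K)`. By transitivity, `Fix(K)` is therefore
the orbit of `α` under `N_G(K)`, a subgroup containing `G_α`; such an orbit is a block, and
`N_G(K)` is transitive on it.
-/

open Pointwise

namespace Subgroup

variable {G : Type*} [Group G]

theorem map_conj_mul (H : Subgroup G) (g k : G) :
    H.map (MulAut.conj (g * k) : G →* G) =
      (H.map (MulAut.conj k : G →* G)).map (MulAut.conj g : G →* G) := by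
  rw [map_map, map_mul]
  rfl

theorem mem_normalizer_of_le_map_conj_of_pow_mem {H : Subgroup G} {g : G} {m : ℕ} (hm : m ≠ 0)
    (hle : H ≤ H.map (MulAut.conj g : G →* G)) (hpow : g ^ m ∈ normalizer (H : Set G)) :
    g ∈ normalizer (H : Set G) := by
  have hmono : Monotone fun k : ℕ => H.map (MulAut.conj (g ^ k) : G →* G) :=
    monotone_nat_of_le_succ fun k => by
      rw [pow_succ, map_conj_mul]
      exact map_mono hle
  rw [mem_normalizer_iff_map_conj_eq] at hpow ⊢
  refine le_antisymm ?_ hle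
  calc H.map (MulAut.conj g : G →* G) = H.map (MulAut.conj (g ^ 1) : G →* G) := by rw [pow_one]
    _ ≤ H.map (MulAut.conj (g ^ m) : G →* G) := hmono (Nat.one_le_iff_ne_zero.mpr hm)
    _ = H := hpow

end Subgroup

namespace MulAction

open Subgroup

variable {G X : Type*} [Group G] [MulAction G X]

theorem exists_pow_mem_stabilizer [Finite X] (g : G) (a : X) :
    ∃ m ≠ 0, g ^ m ∈ stabilizer G a :=
  ⟨period g a,
    (Function.minimalPeriod_pos_of_mem_periodicPts ((MulAction.injective g).mem_periodicPts a)).ne',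
    pow_period_smul g a⟩

theorem stabilizer_smul_le_iff {g : G} {a : X} {H : Subgroup G} :
    H.map (MulAut.conj g : G →* G) ≤ stabilizer G (g • a) ↔ H ≤ stabilizer G a := by
  rw [stabilizer_smul_eq_stabilizer_map_conj, MulEquiv.toMonoidHom_eq_coe,
    map_le_map_iff_of_injective (MulAut.conj g).injective]

variable {N : Subgroup G} [N.Normal]

theorem inf_stabilizer_smul (g : G) (a : X) :
    N ⊓ stabilizer G (g • a) = (N ⊓ stabilizer G a).map (MulAut.conj g : G →* G) := by
  rw [map_inf _ _ _ (MulAut.conj g).injective, Normal.map_conj_eq,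
    stabilizer_smul_eq_stabilizer_map_conj, MulEquiv.toMonoidHom_eq_coe]

theorem stabilizer_le_normalizer_inf_stabilizer (a : X) :
    stabilizer G a ≤ normalizer ((N ⊓ stabilizer G a : Subgroup G) : Set G) := fun g hg => by
  rw [mem_normalizer_iff_map_conj_eq, ← inf_stabilizer_smul, mem_stabilizer_iff.mp hg]

theorem inf_stabilizer_le_stabilizer_smul_iff [Finite X] {g : G} {a : X} :
    N ⊓ stabilizer G a ≤ stabilizer G (g • a) ↔
      g ∈ normalizer ((N ⊓ stabilizer G a : Subgroup G) : Set G) := by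
  constructor
  · intro hle
    obtain ⟨m, hm, hpow⟩ := exists_pow_mem_stabilizer g a
    refine mem_normalizer_of_le_map_conj_of_pow_mem hm ?_
      (stabilizer_le_normalizer_inf_stabilizer a hpow)
    rw [← inf_stabilizer_smul]
    exact le_inf inf_le_left hle
  · intro hg
    rw [mem_normalizer_iff_map_conj_eq] at hg
    conv_lhs => rw [← hg]
    exact stabilizer_smul_le_iff.mpr inf_le_right

theorem setOf_inf_stabilizer_le_eq_orbit [Finite X] [IsPretransitive G X] (a : X) :
    {x | N ⊓ stabilizer G a ≤ stabilizer G x} =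
      orbit (normalizer ((N ⊓ stabilizer G a : Subgroup G) : Set G)) a := by
  refine Set.Subset.antisymm (fun x hx => ?_) ?_
  · obtain ⟨g, rfl⟩ := exists_smul_eq G a x
    exact ⟨⟨g, inf_stabilizer_le_stabilizer_smul_iff.mp hx⟩, rfl⟩
  · rintro _ ⟨⟨g, hg⟩, rfl⟩
    exact inf_stabilizer_le_stabilizer_smul_iff.mpr hg

end MulAction

open MulAction

theorem stmt_13 {G X : Type*} [Group G] [Fintype X] [MulAction G X]
    (htrans : MulAction.IsPretransitive G X)
    (N : Subgroup G) (hN : N.Normal) (α : X)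
    (F : Set X) (hF : F = {x : X | ∀ n : G, n ∈ N → n • α = α → n • x = x}) :
    (∀ g : G, g • F = F ∨ Disjoint (g • F) F) ∧
    (∀ x ∈ F, ∀ y ∈ F, ∃ g ∈ Subgroup.normalizer ((N ⊓ MulAction.stabilizer G α : Subgroup G) : Set G), g • x = y) := by
  have hF_orbit :
      F = orbit (Subgroup.normalizer ((N ⊓ stabilizer G α : Subgroup G) : Set G)) α := by
    rw [← setOf_inf_stabilizer_le_eq_orbit, hF]
    ext x
    simp only [Set.mem_ofPred_eq, SetLike.le_def, Subgroup.mem_inf, mem_stabilizer_iff, and_imp]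
  subst hF_orbit
  refine ⟨isBlock_iff_smul_eq_or_disjoint.mp
    (IsBlock.of_orbit (stabilizer_le_normalizer_inf_stabilizer α)), ?_⟩
  intro x hx y hy
  obtain ⟨g, rfl⟩ : y ∈ orbit _ x := by rwa [orbit_eq_iff.mpr hx]
  exact ⟨g, g.2, rfl⟩
end

section
/- Let d, b be positive integers and let S be a finite set of positive integers each less than d, with s = Σ_{i∈S} d_i for given positive integers d_i. Suppose a group G acts t-transitively on a set of d classes and transitively on a set of b lines, where each line determines exactly s classes 'marked' by it (i.e., meeting it in a size belonging to S). Then for every h ≤ min(t, s), the product ∏_{j=0}^{h-1}(d-j) divides b·∏_{j=0}^{h-1}(s-j). -/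
/-!
Count the pairs `(f, l)` of an injective `h`-tuple of classes `f` and a line `l` marking every
entry of `f`. Each line marks `s` classes, hence lies in `s (s-1) ⋯ (s-h+1)` such pairs. Since `G`
is `h`-transitive on classes and permutes lines compatibly with the marking, every one of the
`d (d-1) ⋯ (d-h+1)` tuples lies in the same number `k` of pairs, so `d^(h) · k = b · s^(h)`.
-/

open Finset

theorem card_embedding_forall_mem {ι α : Type*} [Fintype ι] [DecidableEq ι] [Fintype α]
    [DecidableEq α] (A : Finset α) : #{f : ι ↪ α | ∀ i, f i ∈ A} = (#A).descFactorial (Fintype.card ι) := by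
  let e : {f : ι ↪ α // ∀ i, f i ∈ A} ≃ (ι ↪ A) :=
    { toFun := fun f => f.1.codRestrict _ f.2
      invFun := fun f => ⟨f.trans (Function.Embedding.subtype _), fun i => (f i).2⟩
      left_inv := fun _ => rfl
      right_inv := fun _ => rfl }
  rw [← Fintype.card_subtype, Fintype.card_congr e, Fintype.card_embedding_eq, Fintype.card_coe]

theorem descFactorial_dvd_card_mul_descFactorial {ι α β : Type*} [Fintype ι] [DecidableEq ι]
    [Fintype α] [DecidableEq α] [Fintype β] (mark : β → Finset α) (s : ℕ)
    (hcard : ∀ l, #(mark l) = s) (hconst : ∃ k, ∀ f : ι ↪ α, #{l | ∀ i, f i ∈ mark l} = k) :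
    (Fintype.card α).descFactorial (Fintype.card ι) ∣
      Fintype.card β * s.descFactorial (Fintype.card ι) := by
  obtain ⟨k, hk⟩ := hconst
  have hlines (l : β) : #{f : ι ↪ α | ∀ i, f i ∈ mark l} = s.descFactorial (Fintype.card ι) := by
    rw [card_embedding_forall_mem, hcard]
  have hcount := card_mul_eq_card_mul (s := (univ : Finset (ι ↪ α))) (t := univ)
    (fun (f : ι ↪ α) (l : β) => ∀ i, f i ∈ mark l) (fun f _ => hk f) (fun l _ => hlines l)
  rw [card_univ, card_univ, Fintype.card_embedding_eq] at hcount
  exact Dvd.intro k hcount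

section Equivariant

variable {G α β ι : Type*} [Group G] [MulAction G α] [MulAction G β] [DecidableEq α] [Fintype ι]
  {mark : β → Finset α}

theorem smul_mem_mark_smul_iff
    (hmark : ∀ (g : G) (l : β), mark (g • l) = (mark l).image (fun c => g • c))
    (g : G) (c : α) (l : β) : g • c ∈ mark (g • l) ↔ c ∈ mark l := by
  rw [hmark]
  exact Finset.smul_mem_smul_finset_iff g

theorem card_filter_forall_smul_mem_mark [Fintype β]
    (hmark : ∀ (g : G) (l : β), mark (g • l) = (mark l).image (fun c => g • c))
    (g : G) (f : ι → α) :
    #{l | ∀ i, g • f i ∈ mark l} = #{l | ∀ i, f i ∈ mark l} := by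
  refine card_equiv (MulAction.toPerm g⁻¹) fun l => ?_
  simp only [mem_filter, mem_univ, true_and, MulAction.toPerm_apply]
  refine forall_congr' fun i => ?_
  rw [← smul_mem_mark_smul_iff hmark g (f i) (g⁻¹ • l), smul_inv_smul]

theorem exists_card_filter_forall_mem_mark_eq [Fintype β]
    (hmark : ∀ (g : G) (l : β), mark (g • l) = (mark l).image (fun c => g • c))
    (htrans : ∀ f₁ f₂ : ι ↪ α, ∃ g : G, ∀ i, g • f₁ i = f₂ i) :
    ∃ k, ∀ f : ι ↪ α, #{l | ∀ i, f i ∈ mark l} = k := by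
  rcases isEmpty_or_nonempty (ι ↪ α) with hempty | ⟨⟨f₀⟩⟩
  · exact ⟨0, fun f => hempty.elim f⟩
  · refine ⟨#{l | ∀ i, f₀ i ∈ mark l}, fun f => ?_⟩
    obtain ⟨g, hg⟩ := htrans f₀ f
    simp only [← hg]
    exact card_filter_forall_smul_mem_mark hmark g f₀

end Equivariant

theorem stmt_19_general {G Classes Lines : Type*} [Group G]
    [Fintype Classes] [Fintype Lines] [DecidableEq Classes]
    [MulAction G Classes] [MulAction G Lines]
    (d b t s : ℕ)
    (hd : Fintype.card Classes = d) (hb : Fintype.card Lines = b)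
    (hCtrans : ∀ h : ℕ, h ≤ t → ∀ f₁ f₂ : Fin h → Classes,
      Function.Injective f₁ → Function.Injective f₂ →
      ∃ g : G, ∀ i, g • f₁ i = f₂ i)
    (mark : Lines → Finset Classes)
    (hmark : ∀ (g : G) (l : Lines), mark (g • l) = (mark l).image (fun c => g • c))
    (hcard : ∀ l : Lines, (mark l).card = s) :
    ∀ h : ℕ, h ≤ min t s →
      (∏ j ∈ Finset.range h, (d - j)) ∣ b * ∏ j ∈ Finset.range h, (s - j) := by
  intro h hh
  rw [← Nat.descFactorial_eq_prod_range, ← Nat.descFactorial_eq_prod_range, ← hd, ← hb,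
    ← Fintype.card_fin h]
  refine descFactorial_dvd_card_mul_descFactorial mark s hcard ?_
  refine exists_card_filter_forall_mem_mark_eq hmark fun f₁ f₂ => ?_
  exact hCtrans h (hh.trans (min_le_left t s)) f₁ f₂ f₁.injective f₂.injective

theorem stmt_19 {G Classes Lines : Type*} [Group G]
    [Fintype Classes] [Fintype Lines] [DecidableEq Classes]
    [MulAction G Classes] [MulAction G Lines]
    (d b t s : ℕ)
    (hd : Fintype.card Classes = d) (hb : Fintype.card Lines = b)
    (S : Finset ℕ) (d_ : ℕ → ℕ) (hS : ∀ i ∈ S, 0 < i ∧ i < d)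
    (hs : s = ∑ i ∈ S, d_ i)
    (hLtrans : MulAction.IsPretransitive G Lines)
    (hCtrans : ∀ h : ℕ, h ≤ t → ∀ f₁ f₂ : Fin h → Classes,
      Function.Injective f₁ → Function.Injective f₂ →
      ∃ g : G, ∀ i, g • f₁ i = f₂ i)
    (mark : Lines → Finset Classes)
    (hmark : ∀ (g : G) (l : Lines), mark (g • l) = (mark l).image (fun c => g • c))
    (hcard : ∀ l : Lines, (mark l).card = s) :
    ∀ h : ℕ, h ≤ min t s →
      (∏ j ∈ Finset.range h, (d - j)) ∣ b * ∏ j ∈ Finset.range h, (s - j) :=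
  stmt_19_general d b t s hd hb hCtrans mark hmark hcard
end
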